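/- Suppose b = 1, τ = ε + a and ε² − a² = 2. Then the third complex derivative of the entire function λ ↦ Δ(λ, τ) at λ = 0 equals (ε + a)²(ε − 2a) = 6ε − 2ε³ − 2a(ε² − 2), while Δ(0, τ) and its first two derivatives at 0 all vanish. Consequently, if 6ε − 2ε³ − 2a(ε² − 2) ≠ 0, then λ = 0 is a zero of order exactly three of λ ↦ Δ(λ, τ). -/

import Mathlib

open Complex

/-- The characteristic function Δ(λ, τ) = λ² − ελ + 1 − (aλ + b)·exp(−λτ) of the
linearized van der Pol equation with delayed feedback. -/
noncomputable def charFn (ε a b τ : ℝ) (lam : ℂ) : ℂ :=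
  lam ^ 2 - (ε : ℂ) * lam + 1 - ((a : ℂ) * lam + (b : ℂ)) * Complex.exp (-lam * (τ : ℂ))

/-- `z` is a zero of order exactly `n` of `f`: the derivatives of order `< n` all vanish
at `z`, and the `n`-th derivative does not. -/
def IsZeroOfOrderExactly (f : ℂ → ℂ) (z : ℂ) (n : ℕ) : Prop :=
  (∀ k < n, iteratedDeriv k f z = 0) ∧ iteratedDeriv n f z ≠ 0

/-! Δ(·, τ) is a quadratic polynomial minus `affineMulExp τ a b`, and both kinds of function
are closed under differentiation, so the derivatives at 0 can be read off by iteration. -/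

open Polynomial

theorem Polynomial.iteratedDeriv_eval {𝕜 : Type*} [NontriviallyNormedField 𝕜] (p : 𝕜[X])
    (n : ℕ) : iteratedDeriv n (fun x => p.eval x) = fun x => (derivative^[n] p).eval x := by
  induction n with
  | zero => simp
  | succ n ih =>
    rw [iteratedDeriv_succ, ih, Function.iterate_succ_apply']
    funext x
    exact Polynomial.deriv _

noncomputable def affineMulExp (τ c d z : ℂ) : ℂ := (c * z + d) * exp (-z * τ)

section affineMulExp

variable (τ c d : ℂ)

theorem hasDerivAt_affineMulExp (z : ℂ) :
    HasDerivAt (affineMulExp τ c d) (affineMulExp τ (-τ * c) (c - τ * d) z) z := by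
  have hexp : HasDerivAt (fun z => exp (-z * τ)) (exp (-z * τ) * -τ) z :=
    ((hasDerivAt_neg z).mul_const τ).cexp.congr_deriv (by ring)
  have := ((hasDerivAt_id z).const_mul c |>.add_const d).mul hexp
  exact this.congr_deriv (by simp only [affineMulExp, id]; ring)

theorem deriv_affineMulExp : deriv (affineMulExp τ c d) = affineMulExp τ (-τ * c) (c - τ * d) :=
  funext fun z => (hasDerivAt_affineMulExp τ c d z).deriv

theorem affineMulExp_zero : affineMulExp τ c d 0 = d := by
  simp [affineMulExp]

theorem contDiff_affineMulExp {n : WithTop ℕ∞} : ContDiff ℂ n (affineMulExp τ c d) := by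
  unfold affineMulExp
  fun_prop

end affineMulExp

section charFn

variable (ε a b τ : ℝ)

theorem iteratedDeriv_charFn_zero (n : ℕ) :
    iteratedDeriv n (charFn ε a b τ) 0 =
      (derivative^[n] (X ^ 2 - C (ε : ℂ) * X + 1)).eval 0 -
        iteratedDeriv n (affineMulExp τ a b) 0 := by
  have hsplit : charFn ε a b τ =
      fun z => (X ^ 2 - C (ε : ℂ) * X + 1).eval z - affineMulExp τ a b z := by
    funext z
    simp [charFn, affineMulExp]
  have hpoly : ContDiff ℂ n fun z => (X ^ 2 - C (ε : ℂ) * X + 1).eval z := by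
    simp only [eval_add, eval_sub, eval_pow, eval_X, eval_mul, eval_C, eval_one]
    fun_prop
  rw [hsplit, iteratedDeriv_fun_sub hpoly.contDiffAt (contDiff_affineMulExp _ _ _).contDiffAt,
    Polynomial.iteratedDeriv_eval]

theorem charFn_zero : charFn ε a b τ 0 = 1 - b := by
  simp [charFn]

theorem deriv_charFn_zero : deriv (charFn ε a b τ) 0 = τ * b - ε - a := by
  rw [← iteratedDeriv_one, iteratedDeriv_charFn_zero]
  simp [deriv_affineMulExp, affineMulExp_zero]
  ring

theorem iteratedDeriv_two_charFn_zero :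
    iteratedDeriv 2 (charFn ε a b τ) 0 = 2 + 2 * τ * a - τ ^ 2 * b := by
  simp [iteratedDeriv_charFn_zero, iteratedDeriv_succ', deriv_affineMulExp, affineMulExp_zero]
  ring

theorem iteratedDeriv_three_charFn_zero :
    iteratedDeriv 3 (charFn ε a b τ) 0 = τ ^ 3 * b - 3 * τ ^ 2 * a := by
  simp [iteratedDeriv_charFn_zero, iteratedDeriv_succ', deriv_affineMulExp, affineMulExp_zero]
  ring

end charFn

/-- For b = 1, τ = ε + a and ε² − a² = 2, the third derivative of Δ(·, τ) at λ = 0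
equals (ε + a)²(ε − 2a) = 6ε − 2ε³ − 2a(ε² − 2), the value and first two derivatives
vanish at 0, and if 6ε − 2ε³ − 2a(ε² − 2) ≠ 0 then λ = 0 is a zero of order exactly
three. -/
theorem triple_zero_root (ε a b τ : ℝ) (hb : b = 1) (hτ : τ = ε + a)
    (h2 : ε ^ 2 - a ^ 2 = 2) :
    iteratedDeriv 3 (charFn ε a b τ) 0 = ((ε : ℂ) + a) ^ 2 * ((ε : ℂ) - 2 * a) ∧
    ((ε : ℂ) + a) ^ 2 * ((ε : ℂ) - 2 * a)
      = 6 * (ε : ℂ) - 2 * (ε : ℂ) ^ 3 - 2 * (a : ℂ) * ((ε : ℂ) ^ 2 - 2) ∧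
    charFn ε a b τ 0 = 0 ∧
    deriv (charFn ε a b τ) 0 = 0 ∧
    iteratedDeriv 2 (charFn ε a b τ) 0 = 0 ∧
    (6 * ε - 2 * ε ^ 3 - 2 * a * (ε ^ 2 - 2) ≠ 0 →
      IsZeroOfOrderExactly (charFn ε a b τ) 0 3) := by
  subst hb hτ
  have h2' : (ε : ℂ) ^ 2 - (a : ℂ) ^ 2 = 2 := by exact_mod_cast h2
  have hcubic : ((ε : ℂ) + a) ^ 2 * ((ε : ℂ) - 2 * a)
      = 6 * (ε : ℂ) - 2 * (ε : ℂ) ^ 3 - 2 * (a : ℂ) * ((ε : ℂ) ^ 2 - 2) := by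
    linear_combination (3 * (ε : ℂ) + 2 * a) * h2'
  have d0 : charFn ε a 1 (ε + a) 0 = 0 := by simp [charFn_zero]
  have d1 : deriv (charFn ε a 1 (ε + a)) 0 = 0 := by
    rw [deriv_charFn_zero]; push_cast; ring
  have d2 : iteratedDeriv 2 (charFn ε a 1 (ε + a)) 0 = 0 := by
    rw [iteratedDeriv_two_charFn_zero]; push_cast; linear_combination -h2'
  have d3 : iteratedDeriv 3 (charFn ε a 1 (ε + a)) 0 = ((ε : ℂ) + a) ^ 2 * ((ε : ℂ) - 2 * a) := by
    rw [iteratedDeriv_three_charFn_zero]; push_cast; ring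
  refine ⟨d3, hcubic, d0, d1, d2, fun hne => ⟨fun k hk => ?_, ?_⟩⟩
  · interval_cases k <;> simpa
  · rw [d3, hcubic]
    exact_mod_cast hne
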